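/- Let ℬ be a nonempty collection of subsets of E_{±n} and let ≺ be an admissible total ordering of E_{±n}. Then the greedy solution of ℬ with respect to ≺ is itself a member of ℬ, provided ℬ is an antichain with respect to inclusion (in particular, whenever the members of ℬ are equinumerous). -/

import Mathlib

/-- The ground set `E_{±n} = {±1, ±2, …, ±n}` as a finite set of integers. -/
noncomputable def SympE (n : ℕ) : Finset ℤ := (Finset.Icc (-(n : ℤ)) (n : ℤ)).erase 0

/-- `negSet S = {-s : s ∈ S}`. -/
def negSet (S : Finset ℤ) : Finset ℤ := S.image (fun x => -x)

/-- A set `S` is admissible if `S ∩ (-S) = ∅`. -/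
def IsAdmissibleSet (S : Finset ℤ) : Prop := ∀ s ∈ S, -s ∉ S

/-- An admissible permutation of `E_{±n}`: a permutation of `ℤ` mapping `E_{±n}` to
itself and commuting with negation.  It induces the admissible total ordering
`x ≺ y ↔ w x < w y` on `E_{±n}`. -/
def IsAdmissiblePerm (n : ℕ) (w : Equiv.Perm ℤ) : Prop :=
  (∀ x ∈ SympE n, w x ∈ SympE n) ∧ ∀ x : ℤ, w (-x) = -(w x)

/-- A weight function `ω` compatible with the admissible ordering induced by `w`:
`i ≺ j` implies `ω i ≤ ω j`. -/
def IsCompatibleWeight (n : ℕ) (w : Equiv.Perm ℤ) (ω : ℤ → ℝ) : Prop :=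
  ∀ i ∈ SympE n, ∀ j ∈ SympE n, w i < w j → ω i ≤ ω j

/-- The elements of `E_{±n}` listed from largest to smallest with respect to the
admissible ordering induced by `w`. -/
noncomputable def orderList (n : ℕ) (w : Equiv.Perm ℤ) : List ℤ :=
  (((SympE n).sort (· ≤ ·)).reverse).map w.symm

/-- The greedy algorithm: processing the elements of the list in order, starting
with the current set `B`, pick up an element iff adding it keeps the current set
a subset of some member of `ℬ`.  Returns the list of picked-up elements in order. -/
def greedyAux (ℬ : Finset (Finset ℤ)) : List ℤ → Finset ℤ → List ℤ
  | [], _ => []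
  | a :: l, B =>
      if ∃ B' ∈ ℬ, insert a B ⊆ B' then a :: greedyAux ℬ l (insert a B)
      else greedyAux ℬ l B

/-- The list of elements picked up by the greedy algorithm on `ℬ`, in decreasing
order with respect to the admissible ordering induced by `w`. -/
noncomputable def greedyPicks (n : ℕ) (ℬ : Finset (Finset ℤ)) (w : Equiv.Perm ℤ) : List ℤ :=
  greedyAux ℬ (orderList n w) ∅

/-- The greedy solution of `ℬ` with respect to the admissible ordering induced
by `w`. -/
noncomputable def greedySol (n : ℕ) (ℬ : Finset (Finset ℤ)) (w : Equiv.Perm ℤ) : Finset ℤ :=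
  (greedyPicks n ℬ w).toFinset

/-- `(E_{±n}, ℬ)` is a symplectic matroid: `ℬ` is a nonempty family of
equinumerous admissible subsets of `E_{±n}` such that for every admissible
ordering and every compatible weight function the greedy solution is optimal. -/
def IsSymplecticMatroid (n : ℕ) (ℬ : Finset (Finset ℤ)) : Prop :=
  ℬ.Nonempty ∧
  (∀ B ∈ ℬ, B ⊆ SympE n ∧ IsAdmissibleSet B) ∧
  (∀ B ∈ ℬ, ∀ B' ∈ ℬ, B.card = B'.card) ∧
  (∀ w : Equiv.Perm ℤ, IsAdmissiblePerm n w →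
    ∀ ω : ℤ → ℝ, IsCompatibleWeight n w ω →
      ∀ B' ∈ ℬ, ∑ b ∈ B', ω b ≤ ∑ b ∈ greedySol n ℬ w, ω b)

/-- The family of independent sets of `(E_{±n}, ℬ)`:
all subsets of `E_{±n}` contained in some member of `ℬ`. -/
noncomputable def indepSets (n : ℕ) (ℬ : Finset (Finset ℤ)) : Finset (Finset ℤ) :=
  (SympE n).powerset.filter (fun I => ∃ B ∈ ℬ, I ⊆ B)

/-- The collection of maximal (with respect to inclusion) members of `ℐ`. -/
def maximalMembers (ℐ : Finset (Finset ℤ)) : Finset (Finset ℤ) :=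
  ℐ.filter (fun B => ∀ I ∈ ℐ, B ⊆ I → I = B)

/-- The independent-set exchange property for symplectic matroids. -/
def ExchangeProp (ℐ : Finset (Finset ℤ)) : Prop :=
  ∀ I ∈ ℐ, ∀ J ∈ ℐ, I.card < J.card →
    (∀ y ∈ J \ I, insert y I ∉ ℐ) →
      ¬ IsAdmissibleSet (I ∪ J) ∧
        ∃ x, x ∉ I ∧ insert x I ∈ ℐ ∧ insert (-x) (I \ negSet J) ∈ ℐ

/-!
The greedy set `G` stays inside some member `B` of `ℬ`, and every element `a` of `B` is
in `G`: when `a` was examined, the set built so far was contained in `G ⊆ B`, so `a` could be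
added. Since every element of `E_{±n}` is examined, `B ⊆ G`, hence `G = B ∈ ℬ`.
-/

theorem exists_superset_union_greedyAux {ℬ : Finset (Finset ℤ)} (L : List ℤ) {B₀ : Finset ℤ}
    (h : ∃ B ∈ ℬ, B₀ ⊆ B) : ∃ B ∈ ℬ, B₀ ∪ (greedyAux ℬ L B₀).toFinset ⊆ B := by
  induction L generalizing B₀ with
  | nil => simpa [greedyAux] using h
  | cons a l ih =>
    by_cases ha : ∃ B ∈ ℬ, insert a B₀ ⊆ B
    · rw [greedyAux, if_pos ha, List.toFinset_cons, Finset.union_insert, ← Finset.insert_union]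
      exact ih ha
    · rw [greedyAux, if_neg ha]
      exact ih h

theorem mem_union_greedyAux_of_mem {ℬ : Finset (Finset ℤ)} {L : List ℤ} {B₀ B : Finset ℤ}
    {a : ℤ} (haL : a ∈ L) (hB : B ∈ ℬ) (hsub : B₀ ∪ (greedyAux ℬ L B₀).toFinset ⊆ B)
    (haB : a ∈ B) : a ∈ B₀ ∪ (greedyAux ℬ L B₀).toFinset := by
  induction L generalizing B₀ with
  | nil => simp at haL
  | cons b l ih =>
    by_cases hb : ∃ B ∈ ℬ, insert b B₀ ⊆ B
    · rw [greedyAux, if_pos hb, List.toFinset_cons, Finset.union_insert,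
        ← Finset.insert_union] at hsub ⊢
      rcases List.mem_cons.mp haL with rfl | haL
      · exact Finset.mem_union_left _ (Finset.mem_insert_self _ _)
      · exact ih haL hsub
    · rw [greedyAux, if_neg hb] at hsub ⊢
      rcases List.mem_cons.mp haL with rfl | haL
      · exact absurd ⟨B, hB, Finset.insert_subset haB (Finset.union_subset_left hsub)⟩ hb
      · exact ih haL hsub

theorem union_greedyAux_mem {ℬ : Finset (Finset ℤ)} {L : List ℤ} {B₀ : Finset ℤ}
    (hL : ∀ B ∈ ℬ, ∀ a ∈ B, a ∈ L) (h : ∃ B ∈ ℬ, B₀ ⊆ B) :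
    B₀ ∪ (greedyAux ℬ L B₀).toFinset ∈ ℬ := by
  obtain ⟨B, hB, hsub⟩ := exists_superset_union_greedyAux L h
  have hsup : B ⊆ B₀ ∪ (greedyAux ℬ L B₀).toFinset := fun a haB =>
    mem_union_greedyAux_of_mem (hL B hB a haB) hB hsub haB
  rwa [Finset.Subset.antisymm hsub hsup]

theorem mem_orderList {n : ℕ} {w : Equiv.Perm ℤ} {x : ℤ} :
    x ∈ orderList n w ↔ w x ∈ SympE n := by
  simp only [orderList, List.mem_map, List.mem_reverse, Finset.mem_sort]
  exact ⟨fun ⟨y, hy, hyx⟩ => by rwa [← hyx, Equiv.apply_symm_apply],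
    fun hx => ⟨w x, hx, w.symm_apply_apply x⟩⟩

theorem greedy_solution_mem_general (n : ℕ)
    (ℬ : Finset (Finset ℤ)) (hne : ℬ.Nonempty)
    (hsubE : ∀ B ∈ ℬ, B ⊆ SympE n)
    (w : Equiv.Perm ℤ) (hw : IsAdmissiblePerm n w) :
    greedySol n ℬ w ∈ ℬ := by
  have hL : ∀ B ∈ ℬ, ∀ a ∈ B, a ∈ orderList n w := fun B hB a ha =>
    mem_orderList.mpr (hw.1 a (hsubE B hB ha))
  obtain ⟨B, hB⟩ := hne
  simpa [greedySol, greedyPicks] using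
    union_greedyAux_mem hL ⟨B, hB, Finset.empty_subset B⟩

/-- If `ℬ` is a nonempty collection of subsets of `E_{±n}` that is an antichain
with respect to inclusion (in particular, if the members of `ℬ` are
equinumerous), then for any admissible total ordering of `E_{±n}` the greedy
solution of `ℬ` is itself a member of `ℬ`. -/
theorem greedy_solution_mem (n : ℕ) (hn : 0 < n)
    (ℬ : Finset (Finset ℤ)) (hne : ℬ.Nonempty)
    (hsubE : ∀ B ∈ ℬ, B ⊆ SympE n)
    (hanti : ∀ B ∈ ℬ, ∀ B' ∈ ℬ, B ⊆ B' → B = B')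
    (w : Equiv.Perm ℤ) (hw : IsAdmissiblePerm n w) :
    greedySol n ℬ w ∈ ℬ :=
  greedy_solution_mem_general n ℬ hne hsubE w hw
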